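/- Let L be a natural number and let j, k be integers with 0 ≤ j < k ≤ 2^L. Then there exists a finite set F of pairs (l, i) of integers with 0 ≤ l ≤ L and 0 ≤ i < 2^l such that: the dyadic intervals [i·2^{-l}, (i+1)·2^{-l}) for (l, i) ∈ F are pairwise disjoint; their union equals [j·2^{-L}, k·2^{-L}); and for each level l, F contains at most 2 pairs whose first coordinate is l. -/

import Mathlib

/-- The level-`l` dyadic interval with index `i`: `[i·2^{-l}, (i+1)·2^{-l})`. -/
def dyadicInterval (l i : ℕ) : Set ℝ :=
  Set.Ico ((i : ℝ) / 2 ^ l) (((i : ℝ) + 1) / 2 ^ l)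

/-!
At the finest level `L + 1` the interval `[j, k)` (in units of `2^{-(L+1)}`) loses at most one
cell at each end, namely when `j` or `k` is odd; what remains, `[2⌈j/2⌉, 2⌊k/2⌋)`, is the
level-`L` interval `[⌈j/2⌉, ⌊k/2⌋)`, which is decomposed by induction on `L` using only levels
`≤ L`. Hence every level contributes at most two cells.
-/

open Set

theorem pairwiseDisjoint_union_of_biUnion_eq_Ico {ι α : Type*} [LinearOrder α] {f : ι → Set α}
    {s t : Set ι} {a b c : α} (hs : s.PairwiseDisjoint f) (ht : t.PairwiseDisjoint f)
    (hsU : ⋃ i ∈ s, f i = Ico a b) (htU : ⋃ i ∈ t, f i = Ico b c) :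
    (s ∪ t).PairwiseDisjoint f :=
  pairwiseDisjoint_union.2 ⟨hs, ht, fun _ hi _ hj _ =>
    Ico_disjoint_Ico_same.mono (hsU ▸ subset_biUnion_of_mem hi) (htU ▸ subset_biUnion_of_mem hj)⟩

def dyadicIco (l m n : ℕ) : Set ℝ :=
  Ico ((m : ℝ) / 2 ^ l) ((n : ℝ) / 2 ^ l)

theorem dyadicIco_eq_dyadicIco_succ (l m n : ℕ) :
    dyadicIco l m n = dyadicIco (l + 1) (2 * m) (2 * n) := by
  simp only [dyadicIco, Nat.cast_mul, Nat.cast_ofNat, pow_succ',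
    mul_div_mul_left _ _ (two_ne_zero' ℝ)]

def IsDyadicTiling (F : Finset (ℕ × ℕ)) (s : Set ℝ) : Prop :=
  (F : Set (ℕ × ℕ)).PairwiseDisjoint (fun p => dyadicInterval p.1 p.2) ∧
    ⋃ p ∈ F, dyadicInterval p.1 p.2 = s

namespace IsDyadicTiling

theorem empty (l m : ℕ) : IsDyadicTiling ∅ (dyadicIco l m m) := by
  simp [IsDyadicTiling, dyadicIco]

theorem singleton (l i : ℕ) : IsDyadicTiling {(l, i)} (dyadicIco l i (i + 1)) := by
  simp [IsDyadicTiling, dyadicIco, dyadicInterval]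

theorem union {F G : Finset (ℕ × ℕ)} {l m n r : ℕ} (hF : IsDyadicTiling F (dyadicIco l m n))
    (hG : IsDyadicTiling G (dyadicIco l n r)) (hmn : m ≤ n) (hnr : n ≤ r) :
    IsDyadicTiling (F ∪ G) (dyadicIco l m r) := by
  refine ⟨?_, ?_⟩
  · rw [Finset.coe_union]
    exact pairwiseDisjoint_union_of_biUnion_eq_Ico hF.1 hG.1 hF.2 hG.2
  · rw [Finset.set_biUnion_union, hF.2, hG.2, dyadicIco, dyadicIco, dyadicIco,
      Ico_union_Ico_eq_Ico (by gcongr) (by gcongr)]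

end IsDyadicTiling

theorem exists_isDyadicTiling_of_le_add_one {l m n : ℕ} (hmn : m ≤ n) (hnm : n ≤ m + 1)
    (hn : n ≤ 2 ^ l) :
    ∃ F : Finset (ℕ × ℕ), (∀ p ∈ F, p.1 = l ∧ p.2 < 2 ^ p.1) ∧ F.card ≤ 1 ∧
      IsDyadicTiling F (dyadicIco l m n) := by
  rcases hmn.eq_or_lt with rfl | hlt
  · exact ⟨∅, by simp, by simp, IsDyadicTiling.empty l m⟩
  · obtain rfl : n = m + 1 := by omega
    exact ⟨{(l, m)}, by simp; omega, by simp, IsDyadicTiling.singleton l m⟩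

theorem card_filter_fst_union_le_two {F G : Finset (ℕ × ℕ)} {L : ℕ} (hF : ∀ p ∈ F, p.1 ≤ L)
    (hFc : ∀ l, (F.filter (fun p => p.1 = l)).card ≤ 2) (hG : ∀ p ∈ G, p.1 = L + 1)
    (hGc : G.card ≤ 2) (l : ℕ) : ((F ∪ G).filter (fun p => p.1 = l)).card ≤ 2 := by
  rw [Finset.filter_union]
  by_cases hl : l = L + 1
  · have hF_empty : F.filter (fun p => p.1 = l) = ∅ :=
      Finset.filter_eq_empty_iff.2 fun p hp => by have := hF p hp; omega
    rw [hF_empty, Finset.empty_union]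
    exact (Finset.card_filter_le _ _).trans hGc
  · have hG_empty : G.filter (fun p => p.1 = l) = ∅ :=
      Finset.filter_eq_empty_iff.2 fun p hp => by have := hG p hp; omega
    rw [hG_empty, Finset.union_empty]
    exact hFc l

theorem exists_isDyadicTiling_dyadicIco (L j k : ℕ) (hjk : j ≤ k) (hk : k ≤ 2 ^ L) :
    ∃ F : Finset (ℕ × ℕ), (∀ p ∈ F, p.1 ≤ L ∧ p.2 < 2 ^ p.1) ∧
      (∀ l, (F.filter (fun p => p.1 = l)).card ≤ 2) ∧ IsDyadicTiling F (dyadicIco L j k) := by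
  induction L generalizing j k with
  | zero =>
    obtain ⟨F, hF, hFc, hFt⟩ := exists_isDyadicTiling_of_le_add_one hjk (by omega) hk
    exact ⟨F, fun p hp => ⟨(hF p hp).1.le, (hF p hp).2⟩,
      fun l => (Finset.card_filter_le _ _).trans (hFc.trans one_le_two), hFt⟩
  | succ L ih =>
    rcases hjk.eq_or_lt with rfl | hjk
    · exact ⟨∅, by simp, by simp, IsDyadicTiling.empty _ _⟩
    obtain ⟨Fm, hFm, hFmc, hFmt⟩ :=
      ih ((j + 1) / 2) (k / 2) (by omega) (by rw [pow_succ] at hk; omega)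
    obtain ⟨Fl, hFl, hFlc, hFlt⟩ := exists_isDyadicTiling_of_le_add_one (l := L + 1)
      (m := j) (n := 2 * ((j + 1) / 2)) (by omega) (by omega) (by omega)
    obtain ⟨Fr, hFr, hFrc, hFrt⟩ := exists_isDyadicTiling_of_le_add_one (l := L + 1)
      (m := 2 * (k / 2)) (n := k) (by omega) (by omega) hk
    rw [dyadicIco_eq_dyadicIco_succ] at hFmt
    refine ⟨Fm ∪ (Fl ∪ Fr), ?_, ?_, ?_⟩
    · simp only [Finset.mem_union]
      rintro p (hp | hp | hp)
      · exact ⟨(hFm p hp).1.trans L.le_succ, (hFm p hp).2⟩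
      · exact ⟨(hFl p hp).1.le, (hFl p hp).2⟩
      · exact ⟨(hFr p hp).1.le, (hFr p hp).2⟩
    · refine card_filter_fst_union_le_two (fun p hp => (hFm p hp).1) hFmc ?_ ?_
      · simp only [Finset.mem_union]
        rintro p (hp | hp)
        exacts [(hFl p hp).1, (hFr p hp).1]
      · exact (Finset.card_union_le _ _).trans (by omega)
    · rw [Finset.union_left_comm]
      exact hFlt.union (hFmt.union hFrt (by omega) (by omega)) (by omega) (by omega)

theorem stmt_11 (L j k : ℕ) (hjk : j < k) (hk : k ≤ 2 ^ L) :
    ∃ F : Finset (ℕ × ℕ),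
      (∀ p ∈ F, p.1 ≤ L ∧ p.2 < 2 ^ p.1) ∧
      (F : Set (ℕ × ℕ)).Pairwise
        (fun p q => Disjoint (dyadicInterval p.1 p.2) (dyadicInterval q.1 q.2)) ∧
      (⋃ p ∈ F, dyadicInterval p.1 p.2) =
        Set.Ico ((j : ℝ) / 2 ^ L) ((k : ℝ) / 2 ^ L) ∧
      ∀ l : ℕ, (F.filter (fun p => p.1 = l)).card ≤ 2 := by
  obtain ⟨F, hF, hFc, hFd, hFu⟩ := exists_isDyadicTiling_dyadicIco L j k hjk.le hk
  exact ⟨F, hF, hFd, hFu, hFc⟩
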